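/- arXiv:1207.4421 — 4 statements merged into one kernel-verified Lean document; each statement's English description precedes it below -/
import Mathlib

section
/- Let d ≥ 1, L : ℝ^d → ℝ, λ > 0, γ > 0, τ ≥ 0, and let S ⊆ {1,…,d} have cardinality s with γ̄ := γ − 16·s·τ > 0. Suppose θ*, θ̂ ∈ ℝ^d satisfy: (i) L(θ*) ≤ L(θ̂); (ii) L(θ̂) + λ‖θ̂‖₁ ≤ L(θ*) + λ‖θ*‖₁; and (iii) L(θ̂) ≥ L(θ*) + (γ/2)‖θ̂ − θ*‖₂² − τ‖θ̂ − θ*‖₁². Then ‖θ̂ − θ*‖₂ ≤ (4/γ̄)·√s·λ + 2·√((λ‖θ*_{Sᶜ}‖₁ + 4τ‖θ*_{Sᶜ}‖₁²)/γ̄). -/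
/-!
Write `Δ = θ̂ - θ*`, `ν = ‖Δ‖₂`, `A = ‖Δ_S‖₁`, `B = ‖Δ_{Sᶜ}‖₁`, `b = ‖θ*_{Sᶜ}‖₁`.
Decomposability of the ℓ₁ norm over `S` gives `‖θ*‖₁ - ‖θ̂‖₁ ≤ A - B + 2b`; since (i) and (ii)
force `‖θ̂‖₁ ≤ ‖θ*‖₁`, this puts `Δ` in the cone `B ≤ A + 2b`, so `‖Δ‖₁² ≤ 8A² + 8b²`, and
Cauchy–Schwarz gives `A ≤ √s ν`. Combining (ii) and (iii) then yields the quadratic inequality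
`γ̄ ν² ≤ 2λ√s ν + 4(λb + 4τb²)`, which is solved for `ν`.
-/

open Finset

section

variable {ι : Type*} [Fintype ι]

theorem sum_abs_le_sqrt_card_mul_sqrt_sum_sq (v : ι → ℝ) (S : Finset ι) :
    ∑ j ∈ S, |v j| ≤ Real.sqrt #S * Real.sqrt (∑ j, v j ^ 2) := by
  rw [← Real.sqrt_mul (Nat.cast_nonneg _)]
  apply Real.le_sqrt_of_sq_le
  calc (∑ j ∈ S, |v j|) ^ 2 ≤ #S * ∑ j ∈ S, |v j| ^ 2 := sq_sum_le_card_mul_sum_sq (s := S)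
    _ = #S * ∑ j ∈ S, v j ^ 2 := by simp only [sq_abs]
    _ ≤ #S * ∑ j, v j ^ 2 := by
      gcongr _ * ?_
      exact sum_le_sum_of_subset_of_nonneg (subset_univ S) fun j _ _ => sq_nonneg _

variable [DecidableEq ι]

theorem sum_abs_sub_sum_abs_le_split (x y : ι → ℝ) (S : Finset ι) :
    ∑ j, |x j| - ∑ j, |y j|
      ≤ ∑ j ∈ S, |y j - x j| - ∑ j ∈ Sᶜ, |y j - x j| + 2 * ∑ j ∈ Sᶜ, |x j| := by
  have hS : ∑ j ∈ S, (|x j| - |y j|) ≤ ∑ j ∈ S, |y j - x j| :=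
    sum_le_sum fun j _ => by
      rw [abs_sub_comm]; exact abs_sub_abs_le_abs_sub _ _
  have hSc : ∑ j ∈ Sᶜ, (|x j| - |y j|) ≤ ∑ j ∈ Sᶜ, (2 * |x j| - |y j - x j|) :=
    sum_le_sum fun j _ => by linarith [abs_sub (y j) (x j)]
  rw [sum_sub_distrib] at hS
  rw [sum_sub_distrib, sum_sub_distrib, ← mul_sum] at hSc
  rw [← sum_add_sum_compl S (fun j => |x j|), ← sum_add_sum_compl S (fun j => |y j|)]
  linarith

theorem mul_sq_l2_error_le {x y : ι → ℝ} (lam γ τ : ℝ) (hlam : 0 ≤ lam) (hτ : 0 ≤ τ)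
    (S : Finset ι) (hl1 : ∑ j, |y j| ≤ ∑ j, |x j|)
    (hbasic : γ / 2 * ∑ j, (y j - x j) ^ 2 - τ * (∑ j, |y j - x j|) ^ 2
      ≤ lam * (∑ j, |x j| - ∑ j, |y j|)) :
    (γ - 16 * #S * τ) * Real.sqrt (∑ j, (y j - x j) ^ 2) ^ 2
      ≤ 2 * lam * Real.sqrt #S * Real.sqrt (∑ j, (y j - x j) ^ 2)
        + 4 * (lam * ∑ j ∈ Sᶜ, |x j| + 4 * τ * (∑ j ∈ Sᶜ, |x j|) ^ 2) := by
  set ν := Real.sqrt (∑ j, (y j - x j) ^ 2)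
  set A := ∑ j ∈ S, |y j - x j|
  set B := ∑ j ∈ Sᶜ, |y j - x j|
  set b := ∑ j ∈ Sᶜ, |x j|
  have hA0 : 0 ≤ A := sum_nonneg fun j _ => abs_nonneg _
  have hB0 : 0 ≤ B := sum_nonneg fun j _ => abs_nonneg _
  have hν2 : ν ^ 2 = ∑ j, (y j - x j) ^ 2 :=
    Real.sq_sqrt (sum_nonneg fun j _ => sq_nonneg _)
  have hsplit : ∑ j, |y j - x j| = A + B := (sum_add_sum_compl S _).symm
  have hdec := sum_abs_sub_sum_abs_le_split x y S
  have hcone : B ≤ A + 2 * b := by linarith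
  have hA : A ≤ Real.sqrt #S * ν := sum_abs_le_sqrt_card_mul_sqrt_sum_sq (fun j => y j - x j) S
  have hA2 : A ^ 2 ≤ #S * ν ^ 2 := by
    calc A ^ 2 ≤ (Real.sqrt #S * ν) ^ 2 := pow_le_pow_left₀ hA0 hA 2
      _ = #S * ν ^ 2 := by rw [mul_pow, Real.sq_sqrt (Nat.cast_nonneg _)]
  have hAB : (A + B) ^ 2 ≤ 8 * A ^ 2 + 8 * b ^ 2 := by
    nlinarith [sq_nonneg (A - b)]
  rw [hsplit, ← hν2] at hbasic
  linarith [mul_le_mul_of_nonneg_left hdec hlam, mul_le_mul_of_nonneg_left hA hlam,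
    mul_le_mul_of_nonneg_left hAB hτ, mul_le_mul_of_nonneg_left hA2 hτ, mul_nonneg hlam hB0]

end

theorem le_div_add_sqrt_of_mul_sq_le {a b c x : ℝ} (ha : 0 < a) (hb : 0 ≤ b)
    (h : a * x ^ 2 ≤ b * x + c) : x ≤ b / a + Real.sqrt (c / a) := by
  rcases le_or_gt x (b / a) with hx | hx
  · linarith [Real.sqrt_nonneg (c / a)]
  -- with `y = x - b/a > 0` the hypothesis reads `a x y ≤ c`, and `y ≤ x`
  set y := x - b / a
  have hy : 0 < y := sub_pos.mpr hx
  have hyx : y ≤ x := sub_le_self _ (div_nonneg hb ha.le)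
  have hxy : a * x * y ≤ c := by
    have : a * x * y = a * x ^ 2 - b * x := by simp only [y]; field_simp
    linarith
  have hy2 : y ^ 2 ≤ c / a := by
    rw [le_div_iff₀ ha]
    nlinarith [mul_le_mul_of_nonneg_left hyx (mul_nonneg ha.le hy.le)]
  have := Real.le_sqrt_of_sq_le hy2
  linarith

theorem regularized_min_l2_error_general {d : ℕ} (L : (Fin d → ℝ) → ℝ)
    (lam γ τ : ℝ) (hlam : 0 < lam) (hτ : 0 ≤ τ)
    (S : Finset (Fin d)) (hbar : 0 < γ - 16 * (S.card : ℝ) * τ)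
    (θs θh : Fin d → ℝ)
    (h1 : L θs ≤ L θh)
    (h2 : L θh + lam * ∑ j, |θh j| ≤ L θs + lam * ∑ j, |θs j|)
    (h3 : L θh ≥ L θs + γ / 2 * (∑ j, (θh j - θs j) ^ 2)
            - τ * (∑ j, |θh j - θs j|) ^ 2) :
    Real.sqrt (∑ j, (θh j - θs j) ^ 2)
      ≤ 4 / (γ - 16 * (S.card : ℝ) * τ) * Real.sqrt (S.card : ℝ) * lam
        + 2 * Real.sqrt ((lam * (∑ j ∈ Sᶜ, |θs j|) + 4 * τ * (∑ j ∈ Sᶜ, |θs j|) ^ 2)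
            / (γ - 16 * (S.card : ℝ) * τ)) := by
  set g := γ - 16 * (S.card : ℝ) * τ
  set c := lam * (∑ j ∈ Sᶜ, |θs j|) + 4 * τ * (∑ j ∈ Sᶜ, |θs j|) ^ 2
  have hl1 : ∑ j, |θh j| ≤ ∑ j, |θs j| :=
    le_of_mul_le_mul_left (by linarith) hlam
  have hquad := mul_sq_l2_error_le lam γ τ hlam.le hτ S hl1 (by linarith)
  have hb : 0 ≤ 2 * lam * Real.sqrt #S := by positivity
  calc Real.sqrt (∑ j, (θh j - θs j) ^ 2)
      ≤ 2 * lam * Real.sqrt #S / g + Real.sqrt (4 * c / g) :=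
        le_div_add_sqrt_of_mul_sq_le hbar hb hquad
    _ ≤ 4 / g * Real.sqrt #S * lam + 2 * Real.sqrt (c / g) := by
        have hfirst : 2 * lam * Real.sqrt #S / g ≤ 4 / g * Real.sqrt #S * lam := by
          rw [div_mul_eq_mul_div, div_mul_eq_mul_div, div_le_div_iff_of_pos_right hbar]
          linarith
        have hsecond : Real.sqrt (4 * c / g) = 2 * Real.sqrt (c / g) := by
          rw [show 4 * c / g = 2 ^ 2 * (c / g) by ring, Real.sqrt_mul (sq_nonneg 2),
            Real.sqrt_sq zero_le_two]
        linarith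

/-- ℓ₂-error bound for the regularized minimizer, Lemma `opterror`, part (a).
Under the regularized-optimality inequality (ii), the restricted strong convexity
inequality (iii), and optimality of `θ*` for `L` (i), the ℓ₂-error of `θ̂` is bounded as
`‖θ̂ − θ*‖₂ ≤ (4/γ̄)·√s·λ + 2·√((λ‖θ*_{Sᶜ}‖₁ + 4τ‖θ*_{Sᶜ}‖₁²)/γ̄)` where `γ̄ = γ − 16sτ`. -/
theorem regularized_min_l2_error {d : ℕ} (hd : 1 ≤ d) (L : (Fin d → ℝ) → ℝ)
    (lam γ τ : ℝ) (hlam : 0 < lam) (hγ : 0 < γ) (hτ : 0 ≤ τ)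
    (S : Finset (Fin d)) (hbar : 0 < γ - 16 * (S.card : ℝ) * τ)
    (θs θh : Fin d → ℝ)
    (h1 : L θs ≤ L θh)
    (h2 : L θh + lam * ∑ j, |θh j| ≤ L θs + lam * ∑ j, |θs j|)
    (h3 : L θh ≥ L θs + γ / 2 * (∑ j, (θh j - θs j) ^ 2)
            - τ * (∑ j, |θh j - θs j|) ^ 2) :
    Real.sqrt (∑ j, (θh j - θs j) ^ 2)
      ≤ 4 / (γ - 16 * (S.card : ℝ) * τ) * Real.sqrt (S.card : ℝ) * lam
        + 2 * Real.sqrt ((lam * (∑ j ∈ Sᶜ, |θs j|) + 4 * τ * (∑ j ∈ Sᶜ, |θs j|) ^ 2)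
            / (γ - 16 * (S.card : ℝ) * τ)) :=
  regularized_min_l2_error_general L lam γ τ hlam hτ S hbar θs θh h1 h2 h3
end

section
/- Let d ≥ 1, L : ℝ^d → ℝ, λ > 0, γ > 0, τ ≥ 0, and let S ⊆ {1,…,d} have cardinality s with γ̄ := γ − 16·s·τ > 0. Suppose θ*, θ̂ ∈ ℝ^d satisfy: (i) L(θ*) ≤ L(θ̂); (ii) L(θ̂) + λ‖θ̂‖₁ ≤ L(θ*) + λ‖θ*‖₁; and (iii) L(θ̂) ≥ L(θ*) + (γ/2)‖θ̂ − θ*‖₂² − τ‖θ̂ − θ*‖₁². Then ‖θ̂ − θ*‖₁ ≤ (8/γ̄)·s·λ + 4·√(s·(λ‖θ*_{Sᶜ}‖₁ + 4τ‖θ*_{Sᶜ}‖₁²)/γ̄) + 2‖θ*_{Sᶜ}‖₁. -/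
open Finset

private lemma quad_bound_aux (x A B : ℝ) (hx : 0 ≤ x) (hA : 0 ≤ A) (hB : 0 ≤ B)
    (h : x ^ 2 ≤ 2 * A * x + B ^ 2) : x ≤ 2 * A + B := by
  by_contra hc
  push_neg at hc
  nlinarith [mul_nonneg hA hB, mul_nonneg hx hB, mul_nonneg hA hx]

private lemma main_alg_aux (lam γ τ sN ε a b Q x : ℝ)
    (hlam : 0 < lam) (hτ : 0 ≤ τ) (hsN0 : 0 ≤ sN)
    (hbar : 0 < γ - 16 * sN * τ)
    (hε0 : 0 ≤ ε) (ha0 : 0 ≤ a) (hb0 : 0 ≤ b) (hx0 : 0 ≤ x)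
    (hcone : b ≤ a + 2 * ε)
    (hkey : γ / 2 * Q - τ * (a + b) ^ 2 ≤ lam * (a - b + 2 * ε))
    (hx2 : x ^ 2 = Q)
    (haX : a ≤ Real.sqrt sN * x)
    (hsq : Real.sqrt sN * Real.sqrt sN = sN) :
    a + b ≤ 8 / (γ - 16 * sN * τ) * sN * lam
        + 4 * Real.sqrt (sN * (lam * ε + 4 * τ * ε ^ 2) / (γ - 16 * sN * τ))
        + 2 * ε := by
  set γb : ℝ := γ - 16 * sN * τ with hγb
  have hCS : a ^ 2 ≤ sN * Q := by
    have h := mul_le_mul haX haX ha0 (by positivity)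
    calc a ^ 2 = a * a := sq a
      _ ≤ (Real.sqrt sN * x) * (Real.sqrt sN * x) := h
      _ = (Real.sqrt sN * Real.sqrt sN) * (x * x) := by ring
      _ = sN * x ^ 2 := by rw [hsq]; ring
      _ = sN * Q := by rw [hx2]
  set c : ℝ := 2 * lam * ε + 8 * τ * ε ^ 2 with hc
  have hc0 : 0 ≤ c := by positivity
  have hquad : γb / 2 * x ^ 2 ≤ lam * (Real.sqrt sN * x) + c := by
    have hab1 : (a + b) ^ 2 ≤ (2 * a + 2 * ε) ^ 2 :=
      pow_le_pow_left₀ (by linarith) (by linarith) 2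
    have hab2 : (2 * a + 2 * ε) ^ 2 ≤ 8 * a ^ 2 + 8 * ε ^ 2 := by
      nlinarith [sq_nonneg (a - ε)]
    have hab : (a + b) ^ 2 ≤ 8 * (sN * Q) + 8 * ε ^ 2 := by linarith
    have hτab : τ * (a + b) ^ 2 ≤ τ * (8 * (sN * Q) + 8 * ε ^ 2) :=
      mul_le_mul_of_nonneg_left hab hτ
    have hlamA : lam * a ≤ lam * (Real.sqrt sN * x) :=
      mul_le_mul_of_nonneg_left haX hlam.le
    have hlb : 0 ≤ lam * b := mul_nonneg hlam.le hb0
    rw [hx2, hγb, hc]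
    nlinarith [hkey, hτab, hlamA, hlb]
  set A : ℝ := lam * Real.sqrt sN / γb with hA
  set B : ℝ := Real.sqrt (2 * c / γb) with hB
  have hA0 : 0 ≤ A := by positivity
  have hB0 : 0 ≤ B := Real.sqrt_nonneg _
  have hB2 : B ^ 2 = 2 * c / γb := Real.sq_sqrt (by positivity)
  have hxb : x ≤ 2 * A + B := by
    apply quad_bound_aux x A B hx0 hA0 hB0
    have key2 : γb * x ^ 2 ≤ γb * (2 * A * x + B ^ 2) := by
      have e : γb * (2 * A * x + B ^ 2) = 2 * (lam * (Real.sqrt sN * x)) + 2 * c := by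
        rw [hA, hB2]; field_simp
      have h2q := mul_le_mul_of_nonneg_left hquad (by norm_num : (0:ℝ) ≤ 2)
      calc γb * x ^ 2 = 2 * (γb / 2 * x ^ 2) := by ring
        _ ≤ 2 * (lam * (Real.sqrt sN * x) + c) := h2q
        _ = 2 * (lam * (Real.sqrt sN * x)) + 2 * c := by ring
        _ = γb * (2 * A * x + B ^ 2) := e.symm
    exact le_of_mul_le_mul_left key2 hbar
  have hfin : a + b ≤ 2 * (Real.sqrt sN * x) + 2 * ε := by
    linarith
  have hxx : Real.sqrt sN * x ≤ 2 * lam * sN / γb + Real.sqrt sN * B := by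
    have hmul := mul_le_mul_of_nonneg_left hxb (Real.sqrt_nonneg sN)
    calc Real.sqrt sN * x ≤ Real.sqrt sN * (2 * A + B) := hmul
      _ = 2 * (Real.sqrt sN * Real.sqrt sN) * lam / γb + Real.sqrt sN * B := by
          rw [hA]; ring
      _ = 2 * lam * sN / γb + Real.sqrt sN * B := by rw [hsq]; ring
  have hsB : Real.sqrt sN * B =
      2 * Real.sqrt (sN * (lam * ε + 4 * τ * ε ^ 2) / γb) := by
    rw [hB, ← Real.sqrt_mul hsN0]
    have e : sN * (2 * c / γb) = 4 * (sN * (lam * ε + 4 * τ * ε ^ 2) / γb) := by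
      rw [hc]; ring
    rw [e, show (4:ℝ) = 2 ^ 2 by norm_num, Real.sqrt_mul (by positivity),
      Real.sqrt_sq (by norm_num : (0:ℝ) ≤ 2)]
  have hlast : 4 * lam * sN / γb ≤ 8 / γb * sN * lam := by
    have hpos : 0 ≤ lam * sN / γb := by positivity
    calc 4 * lam * sN / γb = 4 * (lam * sN / γb) := by ring
      _ ≤ 8 * (lam * sN / γb) := by linarith
      _ = 8 / γb * sN * lam := by ring
  calc a + b ≤ 2 * (Real.sqrt sN * x) + 2 * ε := hfin
    _ ≤ 2 * (2 * lam * sN / γb + Real.sqrt sN * B) + 2 * ε := by linarith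
    _ = 4 * lam * sN / γb + 2 * (Real.sqrt sN * B) + 2 * ε := by ring
    _ = 4 * lam * sN / γb
        + 4 * Real.sqrt (sN * (lam * ε + 4 * τ * ε ^ 2) / γb) + 2 * ε := by
          rw [hsB]; ring
    _ ≤ 8 / γb * sN * lam
        + 4 * Real.sqrt (sN * (lam * ε + 4 * τ * ε ^ 2) / γb) + 2 * ε := by
          linarith

/-- ℓ₁-error bound for the regularized minimizer, Lemma `opterror`, part (b).
Under the regularized-optimality inequality (ii), the restricted strong convexity
inequality (iii), and optimality of `θ*` for `L` (i), the ℓ₁-error of `θ̂` is bounded as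
`‖θ̂ − θ*‖₁ ≤ (8/γ̄)·s·λ + 4·√(s(λ‖θ*_{Sᶜ}‖₁ + 4τ‖θ*_{Sᶜ}‖₁²)/γ̄) + 2‖θ*_{Sᶜ}‖₁`
where `γ̄ = γ − 16sτ`. -/
theorem regularized_min_l1_error {d : ℕ} (hd : 1 ≤ d) (L : (Fin d → ℝ) → ℝ)
    (lam γ τ : ℝ) (hlam : 0 < lam) (hγ : 0 < γ) (hτ : 0 ≤ τ)
    (S : Finset (Fin d)) (hbar : 0 < γ - 16 * (S.card : ℝ) * τ)
    (θs θh : Fin d → ℝ)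
    (h1 : L θs ≤ L θh)
    (h2 : L θh + lam * ∑ j, |θh j| ≤ L θs + lam * ∑ j, |θs j|)
    (h3 : L θh ≥ L θs + γ / 2 * (∑ j, (θh j - θs j) ^ 2)
            - τ * (∑ j, |θh j - θs j|) ^ 2) :
    (∑ j, |θh j - θs j|)
      ≤ 8 / (γ - 16 * (S.card : ℝ) * τ) * (S.card : ℝ) * lam
        + 4 * Real.sqrt ((S.card : ℝ) *
            (lam * (∑ j ∈ Sᶜ, |θs j|) + 4 * τ * (∑ j ∈ Sᶜ, |θs j|) ^ 2)
            / (γ - 16 * (S.card : ℝ) * τ))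
        + 2 * (∑ j ∈ Sᶜ, |θs j|) := by
  have hsN0 : (0:ℝ) ≤ (S.card : ℝ) := Nat.cast_nonneg _
  have hε0 : (0:ℝ) ≤ ∑ j ∈ Sᶜ, |θs j| := Finset.sum_nonneg fun j _ => abs_nonneg _
  have ha0 : (0:ℝ) ≤ ∑ j ∈ S, |θh j - θs j| := Finset.sum_nonneg fun j _ => abs_nonneg _
  have hb0 : (0:ℝ) ≤ ∑ j ∈ Sᶜ, |θh j - θs j| := Finset.sum_nonneg fun j _ => abs_nonneg _
  have hQ0 : (0:ℝ) ≤ ∑ j, (θh j - θs j) ^ 2 := Finset.sum_nonneg fun j _ => sq_nonneg _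
  have hsplit : (∑ j, |θh j - θs j|)
      = (∑ j ∈ S, |θh j - θs j|) + ∑ j ∈ Sᶜ, |θh j - θs j| :=
    (Finset.sum_add_sum_compl S _).symm
  have hθh : (∑ j, |θh j|) = (∑ j ∈ S, |θh j|) + ∑ j ∈ Sᶜ, |θh j| :=
    (Finset.sum_add_sum_compl S _).symm
  have hθs : (∑ j, |θs j|) = (∑ j ∈ S, |θs j|) + ∑ j ∈ Sᶜ, |θs j| :=
    (Finset.sum_add_sum_compl S _).symm
  have hS1 : (∑ j ∈ S, |θs j|) - (∑ j ∈ S, |θh j|) ≤ ∑ j ∈ S, |θh j - θs j| := by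
    rw [← Finset.sum_sub_distrib]
    refine Finset.sum_le_sum fun j _ => ?_
    have h := abs_sub_abs_le_abs_sub (θs j) (θh j)
    rw [abs_sub_comm] at h
    linarith
  have hS2 : (∑ j ∈ Sᶜ, |θh j - θs j|) ≤ (∑ j ∈ Sᶜ, |θh j|) + ∑ j ∈ Sᶜ, |θs j| := by
    calc (∑ j ∈ Sᶜ, |θh j - θs j|) ≤ ∑ j ∈ Sᶜ, (|θh j| + |θs j|) :=
          Finset.sum_le_sum fun j _ => abs_sub (θh j) (θs j)
      _ = (∑ j ∈ Sᶜ, |θh j|) + ∑ j ∈ Sᶜ, |θs j| := by rw [Finset.sum_add_distrib]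
  have hnorm : (∑ j, |θh j|) ≤ ∑ j, |θs j| := by
    have hm : lam * (∑ j, |θh j|) ≤ lam * (∑ j, |θs j|) := by linarith
    exact le_of_mul_le_mul_left hm hlam
  have hcone : (∑ j ∈ Sᶜ, |θh j - θs j|)
      ≤ (∑ j ∈ S, |θh j - θs j|) + 2 * ∑ j ∈ Sᶜ, |θs j| := by
    rw [hθh, hθs] at hnorm
    linarith
  have hdiff : (∑ j, |θs j|) - (∑ j, |θh j|)
      ≤ (∑ j ∈ S, |θh j - θs j|) - (∑ j ∈ Sᶜ, |θh j - θs j|)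
        + 2 * ∑ j ∈ Sᶜ, |θs j| := by
    rw [hθh, hθs]; linarith
  have hdiff' : lam * (∑ j, |θs j|) - lam * (∑ j, |θh j|)
      ≤ lam * ((∑ j ∈ S, |θh j - θs j|) - (∑ j ∈ Sᶜ, |θh j - θs j|)
        + 2 * ∑ j ∈ Sᶜ, |θs j|) := by
    rw [← mul_sub]
    exact mul_le_mul_of_nonneg_left hdiff hlam.le
  have hkey : γ / 2 * (∑ j, (θh j - θs j) ^ 2)
      - τ * ((∑ j ∈ S, |θh j - θs j|) + ∑ j ∈ Sᶜ, |θh j - θs j|) ^ 2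
      ≤ lam * ((∑ j ∈ S, |θh j - θs j|) - (∑ j ∈ Sᶜ, |θh j - θs j|)
        + 2 * ∑ j ∈ Sᶜ, |θs j|) := by
    rw [hsplit] at h3
    linarith
  have hCS : (∑ j ∈ S, |θh j - θs j|) ^ 2
      ≤ (S.card : ℝ) * ∑ j, (θh j - θs j) ^ 2 := by
    have hcs1 := sq_sum_le_card_mul_sum_sq (s := S) (f := fun j => |θh j - θs j|)
    simp only [sq_abs] at hcs1
    have hsub : (∑ j ∈ S, (θh j - θs j) ^ 2) ≤ ∑ j, (θh j - θs j) ^ 2 :=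
      Finset.sum_le_sum_of_subset_of_nonneg (Finset.subset_univ S)
        fun j _ _ => sq_nonneg _
    calc (∑ j ∈ S, |θh j - θs j|) ^ 2
        ≤ (S.card : ℝ) * ∑ j ∈ S, (θh j - θs j) ^ 2 := hcs1
      _ ≤ (S.card : ℝ) * ∑ j, (θh j - θs j) ^ 2 :=
          mul_le_mul_of_nonneg_left hsub hsN0
  have haX : (∑ j ∈ S, |θh j - θs j|)
      ≤ Real.sqrt (S.card : ℝ) * Real.sqrt (∑ j, (θh j - θs j) ^ 2) := by
    rw [← Real.sqrt_mul hsN0]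
    rw [Real.le_sqrt ha0 (by positivity)]
    exact hCS
  have hx2 : Real.sqrt (∑ j, (θh j - θs j) ^ 2) ^ 2 = ∑ j, (θh j - θs j) ^ 2 :=
    Real.sq_sqrt hQ0
  rw [hsplit]
  exact main_alg_aux lam γ τ (S.card : ℝ) (∑ j ∈ Sᶜ, |θs j|)
    (∑ j ∈ S, |θh j - θs j|) (∑ j ∈ Sᶜ, |θh j - θs j|)
    (∑ j, (θh j - θs j) ^ 2) (Real.sqrt (∑ j, (θh j - θs j) ^ 2))
    hlam hτ hsN0 hbar hε0 ha0 hb0 (Real.sqrt_nonneg _)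
    hcone hkey hx2 haX (Real.mul_self_sqrt hsN0)
end

section
/- Define φ(α) = log(1 + exp(−α)) (the logistic loss) and ψ(α) = exp(α)/(1 + exp(α))² for α ∈ ℝ, and note φ′(a) = −1/(1 + exp(a)). Then for all real numbers a, b and every M ≥ max(|a|, |b|): φ(b) ≥ φ(a) + φ′(a)·(b − a) + (ψ(M)/2)·(b − a)². -/
/-- The logistic loss `φ(α) = log(1 + exp(−α))`. -/
noncomputable def logisticLoss (α : ℝ) : ℝ := Real.log (1 + Real.exp (-α))

/-- The second derivative of the logistic function,
`ψ(α) = exp(α)/(1 + exp(α))²`. -/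
noncomputable def logisticPsi (α : ℝ) : ℝ := Real.exp α / (1 + Real.exp α) ^ 2

/-!
On `[-M, M]` the second derivative `ψ` of `φ` is at least `ψ(M)`, because `ψ(x) = 1/(2 + 2 cosh x)`
decreases in `|x|`. Hence `φ(x) - ψ(M) x² / 2` is convex there and lies above its tangent at `a`,
which rearranges to the claimed quadratic lower bound.
-/

open Real Set

theorem ConvexOn.add_mul_sub_le_of_hasDerivAt {S : Set ℝ} {f : ℝ → ℝ} {x y f' : ℝ}
    (hf : ConvexOn ℝ S f) (hx : x ∈ S) (hy : y ∈ S) (hf' : HasDerivAt f f' x) :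
    f x + f' * (y - x) ≤ f y := by
  rcases lt_trichotomy x y with hxy | rfl | hyx
  · have h := hf.le_slope_of_hasDerivAt hx hy hxy hf'
    rw [slope_def_field, le_div_iff₀ (sub_pos.2 hxy)] at h
    linarith
  · simp
  · have h := hf.slope_le_of_hasDerivAt hy hx hyx hf'
    rw [slope_def_field, div_le_iff₀ (sub_pos.2 hyx)] at h
    linarith

theorem Convex.add_mul_sub_add_sq_le_of_hasDerivAt2 {S : Set ℝ} (hS : Convex ℝ S)
    {f f' f'' : ℝ → ℝ} {m : ℝ} (hf : ∀ x ∈ S, HasDerivAt f (f' x) x)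
    (hf' : ∀ x ∈ S, HasDerivAt f' (f'' x) x) (hm : ∀ x ∈ S, m ≤ f'' x) {x y : ℝ}
    (hx : x ∈ S) (hy : y ∈ S) :
    f x + f' x * (y - x) + m / 2 * (y - x) ^ 2 ≤ f y := by
  have hg : ∀ z ∈ S, HasDerivAt (fun t ↦ f t - m / 2 * t ^ 2) (f' z - m * z) z := fun z hz ↦
    ((hf z hz).fun_sub ((hasDerivAt_pow 2 z).const_mul (m / 2))).congr_deriv (by norm_num; ring)
  have hg' : ∀ z ∈ S, HasDerivAt (fun t ↦ f' t - m * t) (f'' z - m) z := fun z hz ↦ by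
    simpa using (hf' z hz).fun_sub ((hasDerivAt_id' z).const_mul m)
  have hconv : ConvexOn ℝ S (fun t ↦ f t - m / 2 * t ^ 2) :=
    convexOn_of_hasDerivWithinAt2_nonneg hS
      (fun z hz ↦ (hg z hz).continuousAt.continuousWithinAt)
      (fun z hz ↦ (hg z (interior_subset hz)).hasDerivWithinAt)
      (fun z hz ↦ (hg' z (interior_subset hz)).hasDerivWithinAt)
      (fun z hz ↦ sub_nonneg.2 (hm z (interior_subset hz)))
  have h := hconv.add_mul_sub_le_of_hasDerivAt hx hy (hg x hx)
  linear_combination h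

theorem hasDerivAt_logisticLoss (x : ℝ) :
    HasDerivAt logisticLoss (-(1 / (1 + exp x))) x := by
  have h := (((hasDerivAt_id' x).fun_neg.exp).const_add 1).log (by positivity)
  refine h.congr_deriv ?_
  rw [exp_neg]
  field_simp
  ring

theorem hasDerivAt_neg_one_div_one_add_exp (x : ℝ) :
    HasDerivAt (fun y ↦ -(1 / (1 + exp y))) (logisticPsi x) x := by
  have h := (((hasDerivAt_exp x).const_add 1).fun_inv (by positivity)).fun_neg
  simp only [one_div]
  exact h.congr_deriv (by simp only [logisticPsi]; ring)

theorem logisticPsi_eq_inv_cosh (x : ℝ) : logisticPsi x = (2 + 2 * cosh x)⁻¹ := by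
  rw [logisticPsi, cosh_eq, exp_neg]
  field_simp
  ring

theorem logisticPsi_le_logisticPsi_of_abs_le {x y : ℝ} (h : |x| ≤ |y|) :
    logisticPsi y ≤ logisticPsi x := by
  rw [logisticPsi_eq_inv_cosh, logisticPsi_eq_inv_cosh]
  gcongr
  exact cosh_le_cosh.2 h

/-- Local strong convexity of the scalar logistic loss.
For all `a b : ℝ` and every `M ≥ max(|a|, |b|)`:
`φ(b) ≥ φ(a) + φ′(a)(b − a) + (ψ(M)/2)(b − a)²`, where `φ′(a) = −1/(1 + exp a)`. -/
theorem logistic_local_strong_convexity (a b M : ℝ) (hM : max |a| |b| ≤ M) :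
    logisticLoss b ≥ logisticLoss a + (-(1 / (1 + Real.exp a))) * (b - a)
      + logisticPsi M / 2 * (b - a) ^ 2 := by
  have hM₀ : 0 ≤ M := (abs_nonneg a).trans ((le_max_left _ _).trans hM)
  have mem_Icc {x : ℝ} (hx : |x| ≤ M) : x ∈ Icc (-M) M := abs_le.1 hx
  refine (convex_Icc (-M) M).add_mul_sub_add_sq_le_of_hasDerivAt2
    (fun x _ ↦ hasDerivAt_logisticLoss x) (fun x _ ↦ hasDerivAt_neg_one_div_one_add_exp x)
    (fun x hx ↦ logisticPsi_le_logisticPsi_of_abs_le ?_)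
    (mem_Icc ((le_max_left _ _).trans hM)) (mem_Icc ((le_max_right _ _).trans hM))
  rwa [abs_of_nonneg hM₀, abs_le]
end

section
/- Let d, n ≥ 1, B > 0, R > 0. Let x_1,…,x_n ∈ ℝ^d satisfy ‖x_i‖_∞ ≤ B and let y_1,…,y_n ∈ {−1, 1}. Define the sample logistic loss L_n(θ) = (1/n)·∑_{i=1}^n log(1 + exp(−y_i·⟨x_i, θ⟩)), whose gradient is ∇L_n(θ) = −(1/n)·∑_{i=1}^n (y_i/(1 + exp(y_i·⟨x_i, θ⟩)))·x_i, and let ψ(α) = exp(α)/(1 + exp(α))². Then for all θ, θ̃ ∈ ℝ^d with ‖θ‖₁ ≤ R and ‖θ̃‖₁ ≤ R: L_n(θ̃) − L_n(θ) − ⟨∇L_n(θ), θ̃ − θ⟩ ≥ (ψ(B·R)/(2n))·∑_{i=1}^n ⟨x_i, θ̃ − θ⟩². -/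
/-!
As a function of `u = ⟨x_i, θ⟩`, the `i`-th loss term is `u ↦ log (1 + exp (-y_i u))`, with
second derivative `y_i² ψ(y_i u) = ψ(u)`. On the segment from `θ` to `θ̃` we have
`|⟨x_i, ·⟩| ≤ BR` by Hölder's inequality, and there `ψ ≥ ψ(BR)` since `ψ(u) = 1/(2 + 2 cosh u)`.
So each term dominates its first-order Taylor expansion plus `ψ(BR)/2` times the squared
increment; averaging over `i` gives the claim.
-/

open Finset

/-- The sample logistic loss
`L_n(θ) = (1/n)·∑_{i=1}^n log(1 + exp(−y_i ⟨x_i, θ⟩))`. -/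
noncomputable def sampleLogisticLoss {d n : ℕ} (x : Fin n → Fin d → ℝ)
    (y : Fin n → ℝ) (θ : Fin d → ℝ) : ℝ :=
  (1 / (n : ℝ)) * ∑ i, Real.log (1 + Real.exp (-(y i * ∑ j, x i j * θ j)))

/-- The gradient of the sample logistic loss,
`∇L_n(θ) = −(1/n)·∑_{i=1}^n (y_i/(1 + exp(y_i ⟨x_i, θ⟩)))·x_i`. -/
noncomputable def sampleLogisticGrad {d n : ℕ} (x : Fin n → Fin d → ℝ)
    (y : Fin n → ℝ) (θ : Fin d → ℝ) : Fin d → ℝ :=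
  fun j => -(1 / (n : ℝ)) *
    ∑ i, (y i / (1 + Real.exp (y i * ∑ k, x i k * θ k))) * x i j

open Real

theorem mul_sq_div_two_le_of_le_deriv2 {g g' g'' : ℝ → ℝ}
    (hg : ∀ s, HasDerivAt g (g' s) s) (hg' : ∀ s, HasDerivAt g' (g'' s) s) {a b m : ℝ}
    (hm : ∀ t ∈ Set.Icc (0 : ℝ) 1, m ≤ g'' (a + t * b)) :
    m * b ^ 2 / 2 ≤ g (a + b) - g a - g' a * b := by
  have hline (t : ℝ) : HasDerivAt (fun t => a + t * b) b t := by
    simpa only [id_eq, one_mul] using ((hasDerivAt_id t).mul_const b).const_add a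
  -- `t ↦ g (a + t b) - m b² t² / 2` is convex on `[0, 1]`; compare it with its tangent at `0`.
  set h : ℝ → ℝ := fun t => g (a + t * b) - m * b ^ 2 * t ^ 2 / 2
  set h' : ℝ → ℝ := fun t => g' (a + t * b) * b - m * b ^ 2 * t
  have hh (t : ℝ) : HasDerivAt h (h' t) t :=
    (((hg _).comp t (hline t)).sub
      (((hasDerivAt_pow 2 t).const_mul (m * b ^ 2)).div_const 2)).congr_deriv (by simp only [h']; ring)
  have hh' (t : ℝ) : HasDerivAt h' ((g'' (a + t * b) - m) * b ^ 2) t :=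
    ((((hg' _).comp t (hline t)).mul_const b).sub
      ((hasDerivAt_id t).const_mul (m * b ^ 2))).congr_deriv (by simp only [mul_one]; ring)
  have hconv : ConvexOn ℝ (Set.Icc 0 1) h := by
    refine convexOn_of_hasDerivWithinAt2_nonneg (convex_Icc 0 1)
      (fun t _ => (hh t).continuousAt.continuousWithinAt) (fun t _ => (hh t).hasDerivWithinAt)
      (fun t _ => (hh' t).hasDerivWithinAt) fun t ht => ?_
    rw [interior_Icc] at ht
    exact mul_nonneg (sub_nonneg.2 (hm t (Set.Ioo_subset_Icc_self ht))) (sq_nonneg b)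
  have htangent := hconv.le_slope_of_hasDerivAt (Set.left_mem_Icc.2 zero_le_one)
    (Set.right_mem_Icc.2 zero_le_one) zero_lt_one (hh 0)
  simp only [slope_def_field, h, h'] at htangent
  simp only [zero_mul, add_zero, one_mul, mul_zero, sub_zero, one_pow, zero_pow two_ne_zero,
    zero_div, div_one] at htangent
  linarith

theorem logisticPsi_eq_inv (s : ℝ) : logisticPsi s = (2 + 2 * cosh s)⁻¹ := by
  rw [logisticPsi, cosh_eq, exp_neg]
  field_simp
  ring

theorem logisticPsi_le_of_abs_le {c s : ℝ} (h : |s| ≤ |c|) : logisticPsi c ≤ logisticPsi s := by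
  rw [logisticPsi_eq_inv, logisticPsi_eq_inv]
  gcongr
  exact cosh_le_cosh.2 h

theorem hasDerivAt_log_one_add_exp_neg_mul (y u : ℝ) :
    HasDerivAt (fun u => log (1 + exp (-(y * u)))) (-(y / (1 + exp (y * u)))) u := by
  have hexp : HasDerivAt (fun u => 1 + exp (-(y * u))) (exp (-(y * u)) * -y) u :=
    ((((hasDerivAt_id u).const_mul y).neg).exp).const_add 1 |>.congr_deriv (by simp)
  refine (hexp.log (by positivity)).congr_deriv ?_
  rw [exp_neg]
  field_simp
  ring

theorem hasDerivAt_neg_div_one_add_exp_mul (y u : ℝ) :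
    HasDerivAt (fun u => -(y / (1 + exp (y * u)))) (y ^ 2 * logisticPsi (y * u)) u := by
  have hexp : HasDerivAt (fun u => 1 + exp (y * u)) (exp (y * u) * y) u :=
    (((hasDerivAt_id u).const_mul y).exp).const_add 1 |>.congr_deriv (by simp)
  refine ((hasDerivAt_const u y).div hexp (by positivity)).neg.congr_deriv ?_
  simp only [logisticPsi]
  ring

theorem logisticPsi_mul_sq_div_two_le {y u v c : ℝ} (hy : |y| = 1) (hu : |u| ≤ |c|)
    (hv : |v| ≤ |c|) :
    logisticPsi c * (v - u) ^ 2 / 2 ≤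
      log (1 + exp (-(y * v))) - log (1 + exp (-(y * u))) + y / (1 + exp (y * u)) * (v - u) := by
  have key := mul_sq_div_two_le_of_le_deriv2 (hasDerivAt_log_one_add_exp_neg_mul y)
    (hasDerivAt_neg_div_one_add_exp_mul y) (a := u) (b := v - u) (m := logisticPsi c)
    fun t ht => by
      rw [← sq_abs, hy, one_pow, one_mul]
      refine logisticPsi_le_of_abs_le ?_
      rw [abs_mul, hy, one_mul, abs_le]
      exact (convex_Icc (-|c|) |c|).add_smul_sub_mem (abs_le.1 hu) (abs_le.1 hv) ht
  rw [add_sub_cancel] at key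
  linarith

theorem abs_dotProduct_le {ι : Type*} [Fintype ι] {a v : ι → ℝ} {B : ℝ} (ha : ∀ j, |a j| ≤ B) :
    |a ⬝ᵥ v| ≤ B * ∑ j, |v j| := by
  rw [mul_sum]
  refine (abs_sum_le_sum_abs _ _).trans (sum_le_sum fun j _ => ?_)
  rw [abs_mul]
  exact mul_le_mul_of_nonneg_right (ha j) (abs_nonneg _)

theorem sampleLogisticGrad_dotProduct {d n : ℕ} (x : Fin n → Fin d → ℝ) (y : Fin n → ℝ)
    (θ v : Fin d → ℝ) :
    sampleLogisticGrad x y θ ⬝ᵥ v =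
      -(1 / (n : ℝ)) * ∑ i, y i / (1 + exp (y i * x i ⬝ᵥ θ)) * x i ⬝ᵥ v := by
  simp only [dotProduct, sampleLogisticGrad, mul_sum, sum_mul]
  rw [sum_comm]
  exact sum_congr rfl fun i _ => sum_congr rfl fun j _ => by ring

theorem sample_logistic_rsc_general {d n : ℕ}
    (B R : ℝ)
    (x : Fin n → Fin d → ℝ) (y : Fin n → ℝ)
    (hx : ∀ i j, |x i j| ≤ B)
    (hy : ∀ i, y i = 1 ∨ y i = -1)
    (θ θt : Fin d → ℝ)
    (hθ : ∑ j, |θ j| ≤ R) (hθt : ∑ j, |θt j| ≤ R) :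
    sampleLogisticLoss x y θt - sampleLogisticLoss x y θ
        - (∑ j, sampleLogisticGrad x y θ j * (θt j - θ j))
      ≥ logisticPsi (B * R) / (2 * (n : ℝ)) *
          ∑ i, (∑ j, x i j * (θt j - θ j)) ^ 2 := by
  have hball (i) {w : Fin d → ℝ} (hw : ∑ j, |w j| ≤ R) : |x i ⬝ᵥ w| ≤ |B * R| :=
    calc |x i ⬝ᵥ w| ≤ |B| * ∑ j, |w j| := abs_dotProduct_le fun j => (hx i j).trans (le_abs_self B)
      _ ≤ |B| * |R| := by gcongr; exact hw.trans (le_abs_self R)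
      _ = |B * R| := (abs_mul B R).symm
  have hterm (i) := logisticPsi_mul_sq_div_two_le (y := y i) (by rcases hy i with h | h <;> simp [h])
    (hball i hθ) (hball i hθt)
  change _ - _ - sampleLogisticGrad x y θ ⬝ᵥ (θt - θ) ≥ _ * ∑ i, (x i ⬝ᵥ (θt - θ)) ^ 2
  rw [sampleLogisticGrad_dotProduct, ge_iff_le]
  simp only [sampleLogisticLoss, dotProduct_sub]
  calc logisticPsi (B * R) / (2 * n) * ∑ i, (x i ⬝ᵥ θt - x i ⬝ᵥ θ) ^ 2
      = 1 / n * ∑ i, logisticPsi (B * R) * (x i ⬝ᵥ θt - x i ⬝ᵥ θ) ^ 2 / 2 := by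
        rw [mul_sum, mul_sum]
        exact sum_congr rfl fun i _ => by ring
    _ ≤ 1 / n * ∑ i, (log (1 + exp (-(y i * x i ⬝ᵥ θt))) - log (1 + exp (-(y i * x i ⬝ᵥ θ)))
          + y i / (1 + exp (y i * x i ⬝ᵥ θ)) * (x i ⬝ᵥ θt - x i ⬝ᵥ θ)) := by
        gcongr with i
        exact hterm i
    _ = _ := by
        simp only [sum_add_distrib, sum_sub_distrib, dotProduct]
        ring

/-- Restricted strong convexity of the sample logistic loss over an
ℓ₁-ball.  If `‖x_i‖_∞ ≤ B`, `y_i ∈ {−1, 1}` and `‖θ‖₁, ‖θ̃‖₁ ≤ R`, then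
`L_n(θ̃) − L_n(θ) − ⟨∇L_n(θ), θ̃ − θ⟩ ≥ (ψ(BR)/(2n))·∑_i ⟨x_i, θ̃ − θ⟩²`. -/
theorem sample_logistic_rsc {d n : ℕ} (hd : 1 ≤ d) (hn : 1 ≤ n)
    (B R : ℝ) (hB : 0 < B) (hR : 0 < R)
    (x : Fin n → Fin d → ℝ) (y : Fin n → ℝ)
    (hx : ∀ i j, |x i j| ≤ B)
    (hy : ∀ i, y i = 1 ∨ y i = -1)
    (θ θt : Fin d → ℝ)
    (hθ : ∑ j, |θ j| ≤ R) (hθt : ∑ j, |θt j| ≤ R) :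
    sampleLogisticLoss x y θt - sampleLogisticLoss x y θ
        - (∑ j, sampleLogisticGrad x y θ j * (θt j - θ j))
      ≥ logisticPsi (B * R) / (2 * (n : ℝ)) *
          ∑ i, (∑ j, x i j * (θt j - θ j)) ^ 2 :=
  sample_logistic_rsc_general B R x y hx hy θ θt hθ hθt
end
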